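/- arXiv:1909.03639 — 5 statements merged into one kernel-verified Lean document; each statement's English description precedes it below -/
import Mathlib

section
/- Let h > 0 and k ≥ 1 be real numbers. The k-expansion map Φ_{k,h} is Lipschitz with constant k on the horoball B_h with respect to the hyperbolic metric: for all z, w ∈ B_h one has dist(Φ_{k,h}(z), Φ_{k,h}(w)) ≤ k · dist(z, w). -/
open UpperHalfPlane Real

/-- The `k`-expansion map `Φ_{k,h}` of the horoball `B_h = {z ∈ ℍ : h ≤ Im z}`:
`Φ_{k,h}(z) = Re z + i·h·(Im z / h)^k`. -/
noncomputable def expMap (k h : ℝ) (hh : 0 < h) (z : UpperHalfPlane) : UpperHalfPlane :=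
  ⟨⟨z.re, h * (z.im / h) ^ k⟩, by
    simpa using mul_pos hh (Real.rpow_pos_of_pos (div_pos z.im_pos hh) k)⟩

/-! Write `y, y'` for the imaginary parts of `z, w` and `s = log (y / y')`, the signed distance
between the horocycles through `z` and `w`. Then
`cosh (dist z w) = cosh s + (Re z - Re w)² / (2 y y')`.
The map `Φ_{k,h}` keeps the real parts, multiplies `s` by `k` and does not decrease `y y'`
on `B_h`, so `cosh (dist (Φ z) (Φ w)) ≤ cosh (dist z w) - cosh s + cosh (k s)`. Since
`|s| ≤ dist z w`, the right-hand side is at most `cosh (k · dist z w)`: the difference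
`cosh a - cosh b = 2 sinh ((a + b) / 2) sinh ((a - b) / 2)` only grows when `a ≥ |b|` are
both scaled by `k ≥ 1`. -/

namespace Real

theorem cosh_sub_cosh (a b : ℝ) :
    cosh a - cosh b = 2 * sinh ((a + b) / 2) * sinh ((a - b) / 2) := by
  obtain ⟨p, q, rfl, rfl⟩ : ∃ p q, a = p + q ∧ b = p - q :=
    ⟨(a + b) / 2, (a - b) / 2, by ring, by ring⟩
  rw [show (p + q + (p - q)) / 2 = p by ring, show (p + q - (p - q)) / 2 = q by ring, cosh_add,
    cosh_sub]
  ring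

theorem cosh_sub_cosh_le_cosh_mul_sub_cosh_mul_of_nonneg {a b k : ℝ} (hk : 1 ≤ k) (hb : 0 ≤ b)
    (hba : b ≤ a) : cosh a - cosh b ≤ cosh (k * a) - cosh (k * b) := by
  have sinh_le_sinh_mul {x : ℝ} (hx : 0 ≤ x) : sinh x ≤ sinh (k * x) :=
    sinh_le_sinh.2 (le_mul_of_one_le_left hx hk)
  have hp : 0 ≤ (a + b) / 2 := by linarith
  have hq : 0 ≤ (a - b) / 2 := by linarith
  calc cosh a - cosh b = 2 * sinh ((a + b) / 2) * sinh ((a - b) / 2) := cosh_sub_cosh a b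
    _ ≤ 2 * sinh (k * ((a + b) / 2)) * sinh (k * ((a - b) / 2)) := by
        rw [mul_assoc, mul_assoc]
        gcongr 2 * ?_
        exact mul_le_mul (sinh_le_sinh_mul hp) (sinh_le_sinh_mul hq) (sinh_nonneg_iff.2 hq)
          (sinh_nonneg_iff.2 (by positivity))
    _ = cosh (k * a) - cosh (k * b) := by
        rw [cosh_sub_cosh, ← mul_add, ← mul_sub, mul_div_assoc, mul_div_assoc]

theorem cosh_sub_cosh_le_cosh_mul_sub_cosh_mul {a b k : ℝ} (hk : 1 ≤ k) (hba : |b| ≤ a) :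
    cosh a - cosh b ≤ cosh (k * a) - cosh (k * b) := by
  rw [← cosh_abs b, ← cosh_abs (k * b), abs_mul, abs_of_nonneg (by linarith : 0 ≤ k)]
  exact cosh_sub_cosh_le_cosh_mul_sub_cosh_mul_of_nonneg hk (abs_nonneg b) hba

theorem cosh_log_div {a b : ℝ} (ha : 0 < a) (hb : 0 < b) :
    cosh (log (a / b)) = (a ^ 2 + b ^ 2) / (2 * a * b) := by
  rw [cosh_log (div_pos ha hb)]
  field_simp

end Real

namespace UpperHalfPlane

theorem cosh_dist_eq_cosh_log_im_div_add (z w : ℍ) :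
    cosh (dist z w) = cosh (log (z.im / w.im)) + (z.re - w.re) ^ 2 / (2 * z.im * w.im) := by
  rw [cosh_dist', cosh_log_div z.im_pos w.im_pos]
  ring

theorem abs_log_im_div_le_dist (z w : ℍ) : |log (z.im / w.im)| ≤ dist z w := by
  rw [← abs_of_nonneg dist_nonneg, ← cosh_le_cosh, cosh_dist_eq_cosh_log_im_div_add]
  exact le_add_of_nonneg_right (by positivity)

end UpperHalfPlane

section expMap

variable {k h : ℝ} (hh : 0 < h)

@[simp]
theorem expMap_re (z : ℍ) : (expMap k h hh z).re = z.re := rfl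

@[simp]
theorem expMap_im (z : ℍ) : (expMap k h hh z).im = h * (z.im / h) ^ k := rfl

theorem log_expMap_im_div (z w : ℍ) :
    log ((expMap k h hh z).im / (expMap k h hh w).im) = k * log (z.im / w.im) := by
  rw [expMap_im, expMap_im, mul_div_mul_left _ _ hh.ne',
    ← div_rpow (div_pos z.im_pos hh).le (div_pos w.im_pos hh).le,
    log_rpow (by positivity), div_div_div_cancel_right₀ hh.ne']

theorem im_le_expMap_im (hk : 1 ≤ k) {z : ℍ} (hz : h ≤ z.im) :
    z.im ≤ (expMap k h hh z).im := by
  have hz' : 1 ≤ z.im / h := (one_le_div hh).2 hz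
  calc z.im = h * (z.im / h) ^ (1 : ℝ) := by rw [rpow_one]; field_simp
    _ ≤ h * (z.im / h) ^ k := by gcongr

end expMap

/-- For `h > 0` and `k ≥ 1`, the `k`-expansion map is `k`-Lipschitz on the horoball `B_h`
for the hyperbolic metric. -/
theorem expMap_lipschitz_on_horoball (h k : ℝ) (hh : 0 < h) (hk : 1 ≤ k)
    (z w : UpperHalfPlane) (hz : h ≤ z.im) (hw : h ≤ w.im) :
    dist (expMap k h hh z) (expMap k h hh w) ≤ k * dist z w := by
  have hre : (z.re - w.re) ^ 2 / (2 * (expMap k h hh z).im * (expMap k h hh w).im)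
      ≤ (z.re - w.re) ^ 2 / (2 * z.im * w.im) := by
    rw [mul_assoc, mul_assoc]
    gcongr
    exacts [im_le_expMap_im hh hk hz, im_le_expMap_im hh hk hw]
  have hcosh : cosh (dist (expMap k h hh z) (expMap k h hh w)) ≤ cosh (k * dist z w) :=
    calc cosh (dist (expMap k h hh z) (expMap k h hh w))
        = cosh (k * log (z.im / w.im))
          + (z.re - w.re) ^ 2 / (2 * (expMap k h hh z).im * (expMap k h hh w).im) := by
          rw [cosh_dist_eq_cosh_log_im_div_add, log_expMap_im_div, expMap_re, expMap_re]
      _ ≤ cosh (k * log (z.im / w.im)) + (cosh (dist z w) - cosh (log (z.im / w.im))) := by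
          rw [cosh_dist_eq_cosh_log_im_div_add]
          linarith
      _ ≤ cosh (k * dist z w) := by
          linarith [cosh_sub_cosh_le_cosh_mul_sub_cosh_mul hk (abs_log_im_div_le_dist z w)]
  rwa [cosh_le_cosh, abs_of_nonneg dist_nonneg, abs_of_nonneg (by positivity)] at hcosh
end

section
/- Let h > 0 and k > 0 be real numbers. The k-expansion map Φ_{k,h} multiplies distances along vertical geodesics by exactly k: for all z, w ∈ B_h with Re z = Re w, one has dist(z, w) = |log(Im z) − log(Im w)| and dist(Φ_{k,h}(z), Φ_{k,h}(w)) = k · dist(z, w). -/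
open UpperHalfPlane Real

/-! On a vertical geodesic `log Im` is an arc-length parameter, and in that coordinate `Φ_{k,h}`
is the affine map `t ↦ log h + k (t - log h)`, which scales differences by `k`. -/

theorem UpperHalfPlane.dist_eq_abs_log_sub_of_re_eq {z w : ℍ} (hre : z.re = w.re) :
    dist z w = |Real.log z.im - Real.log w.im| := by
  rw [dist_of_re_eq hre, Real.dist_eq]

section expMap

variable {k h : ℝ} (hh : 0 < h)

theorem log_expMap_im (z : ℍ) :
    Real.log (expMap k h hh z).im = Real.log h + k * (Real.log z.im - Real.log h) := by
  have hzh : 0 < z.im / h := div_pos z.im_pos hh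
  rw [expMap_im, Real.log_mul hh.ne' (rpow_pos_of_pos hzh k).ne', Real.log_rpow hzh,
    Real.log_div z.im_pos.ne' hh.ne']

end expMap

theorem expMap_expands_vertical_geodesics_general (h k : ℝ) (hh : 0 < h) (hk : 0 < k)
    (z w : UpperHalfPlane) (hre : z.re = w.re) :
    dist z w = |Real.log z.im - Real.log w.im| ∧
    dist (expMap k h hh z) (expMap k h hh w) = k * dist z w := by
  have hdist := dist_eq_abs_log_sub_of_re_eq hre
  refine ⟨hdist, ?_⟩
  have hre' : (expMap k h hh z).re = (expMap k h hh w).re := by simpa using hre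
  calc dist (expMap k h hh z) (expMap k h hh w)
      = |k * (Real.log z.im - Real.log w.im)| := by
        rw [dist_eq_abs_log_sub_of_re_eq hre', log_expMap_im, log_expMap_im]
        ring_nf
    _ = k * dist z w := by rw [abs_mul, abs_of_pos hk, hdist]

/-- The `k`-expansion map multiplies distances along vertical geodesics by exactly `k`:
for `z, w ∈ B_h` on a common vertical line, `dist z w = |log (Im z) − log (Im w)|` and
`dist (Φ z) (Φ w) = k · dist z w`. -/
theorem expMap_expands_vertical_geodesics (h k : ℝ) (hh : 0 < h) (hk : 0 < k)
    (z w : UpperHalfPlane) (hz : h ≤ z.im) (hw : h ≤ w.im) (hre : z.re = w.re) :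
    dist z w = |Real.log z.im - Real.log w.im| ∧
    dist (expMap k h hh z) (expMap k h hh w) = k * dist z w :=
  expMap_expands_vertical_geodesics_general h k hh hk z w hre
end

section
/- For every real k ≥ 1, the two-sector expansion map F_k : ℍ → ℍ is k-Lipschitz with respect to the hyperbolic metric: dist(F_k(z), F_k(w)) ≤ k · dist(z, w) for all z, w ∈ ℍ. -/
open UpperHalfPlane Real Set

/-!
In coordinates `z = x + iy`, `sinh² (d(z, w)/2) = (x - x')² / (4yy') + sinh² (|log y - log y'|/2)`,
and `|log y - log y'| ≤ d(z, w)`. The expansion `x + iy ↦ x + iy^k` of the horoball `{y ≥ 1}`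
raises heights and multiplies `|log y - log y'|` by `k`; since `t ↦ sinh² (kt) - sinh² t` is
increasing on `[0, ∞)`, this makes it `k`-Lipschitz. A map that is `k`-Lipschitz on both sides of
the horocycle `{y = 1}` is `k`-Lipschitz on `ℍ`, because a geodesic between points on opposite
sides crosses the horocycle. This glues the expansion with the identity outside the horoball;
conjugating by the isometry `z ↦ -1/z` handles the second horoball, and a second gluing along
`{y = 1}` gives the theorem.
-/

/-- Vertical expansion `z ↦ Re z + i·(Im z)^k` (the `k`-expansion map of the horoball
`{Im z ≥ 1}`, extended to all of `ℍ`). -/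
noncomputable def vexp (k : ℝ) (z : UpperHalfPlane) : UpperHalfPlane :=
  ⟨⟨z.re, z.im ^ k⟩, by simpa using Real.rpow_pos_of_pos z.im_pos k⟩

/-- The hyperbolic isometry `z ↦ -1/z` of the upper half-plane. -/
noncomputable def neginv (z : UpperHalfPlane) : UpperHalfPlane :=
  ⟨-((z : ℂ)⁻¹), by
    have hz : (z : ℂ) ≠ 0 := z.ne_zero
    have him : (-((z : ℂ)⁻¹)).im = z.im / Complex.normSq z := by
      simp [Complex.inv_im, UpperHalfPlane.coe_im, neg_div]
    rw [him]
    exact div_pos z.im_pos (Complex.normSq_pos.mpr hz)⟩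

/-- The two-sector expansion map `F_k : ℍ → ℍ`: the `k`-expansion map on the horoball
`{Im z ≥ 1}`, its conjugate by `z ↦ -1/z` on the horoball `{|z - i/2| ≤ 1/2}` based at `0`,
and the identity elsewhere. -/
noncomputable def twoSector (k : ℝ) (z : UpperHalfPlane) : UpperHalfPlane :=
  if 1 ≤ z.im then vexp k z
  else if ‖(z : ℂ) - Complex.I / 2‖ ≤ 1 / 2 then neginv (vexp k (neginv z))
  else z

theorem sinh_sq_le_sinh_sq_iff {a b : ℝ} : sinh a ^ 2 ≤ sinh b ^ 2 ↔ |a| ≤ |b| := by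
  rw [sq_le_sq, abs_sinh, abs_sinh, sinh_le_sinh]

theorem sinh_sq_sub_sinh_sq (a b : ℝ) :
    sinh a ^ 2 - sinh b ^ 2 = sinh (a + b) * sinh (a - b) := by
  rw [sinh_add, sinh_sub]
  linear_combination sinh b ^ 2 * cosh_sq a - sinh a ^ 2 * cosh_sq b

theorem monotoneOn_sinh_mul_sq_sub_sinh_sq {k : ℝ} (hk : 1 ≤ k) :
    MonotoneOn (fun t => sinh (k * t) ^ 2 - sinh t ^ 2) (Ici 0) := by
  intro u hu t ht hut
  simp only [mem_Ici] at hu ht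
  have hsum : sinh (t + u) ≤ sinh (k * t + k * u) := sinh_le_sinh.2 (by nlinarith)
  have hdiff : sinh (t - u) ≤ sinh (k * t - k * u) := sinh_le_sinh.2 (by nlinarith)
  have hsum₀ : 0 ≤ sinh (t + u) := sinh_nonneg_iff.2 (by linarith)
  have hdiff₀ : 0 ≤ sinh (t - u) := sinh_nonneg_iff.2 (by linarith)
  have := mul_le_mul hsum hdiff hdiff₀ (hsum₀.trans hsum)
  rw [← sinh_sq_sub_sinh_sq, ← sinh_sq_sub_sinh_sq] at this
  dsimp only
  linarith

namespace UpperHalfPlane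

theorem sinh_sq_half_dist (z w : ℍ) :
    sinh (dist z w / 2) ^ 2 = ((z.re - w.re) ^ 2 + (z.im - w.im) ^ 2) / (4 * (z.im * w.im)) := by
  rw [sinh_half_dist, div_pow, mul_pow, sq_sqrt (by positivity), Complex.dist_eq,
    Complex.sq_norm, Complex.normSq_apply]
  simp only [Complex.sub_re, Complex.sub_im, coe_re, coe_im]
  ring

theorem sinh_sq_half_dist_log {a b : ℝ} (ha : 0 < a) (hb : 0 < b) :
    sinh (dist (log a) (log b) / 2) ^ 2 = (a - b) ^ 2 / (4 * (a * b)) := by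
  have := sinh_sq_half_dist (mk ⟨0, a⟩ ha) (mk ⟨0, b⟩ hb)
  rw [dist_of_re_eq (z := mk ⟨0, a⟩ ha) (w := mk ⟨0, b⟩ hb) rfl] at this
  simpa using this

theorem sinh_sq_half_dist_eq_add (z w : ℍ) :
    sinh (dist z w / 2) ^ 2 =
      (z.re - w.re) ^ 2 / (4 * (z.im * w.im)) + sinh (dist (log z.im) (log w.im) / 2) ^ 2 := by
  rw [sinh_sq_half_dist, sinh_sq_half_dist_log z.im_pos w.im_pos, add_div]

theorem dist_le_mul_dist_of_re_eq_of_im_le {k : ℝ} (hk : 1 ≤ k) {z w z' w' : ℍ}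
    (hz : z'.re = z.re) (hw : w'.re = w.re) (hzi : z.im ≤ z'.im) (hwi : w.im ≤ w'.im)
    (hlog : dist (log z'.im) (log w'.im) ≤ k * dist (log z.im) (log w.im)) :
    dist z' w' ≤ k * dist z w := by
  set t := dist z w / 2 with ht
  set u := dist (log z.im) (log w.im) / 2 with hu
  have hu₀ : 0 ≤ u := by positivity
  have hut : u ≤ t := by linarith [dist_log_im_le z w]
  have horiz : (z'.re - w'.re) ^ 2 / (4 * (z'.im * w'.im))
      ≤ (z.re - w.re) ^ 2 / (4 * (z.im * w.im)) := by
    rw [hz, hw]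
    gcongr
  have vert : sinh (dist (log z'.im) (log w'.im) / 2) ^ 2 ≤ sinh (k * u) ^ 2 := by
    rw [sinh_sq_le_sinh_sq_iff, abs_of_nonneg (by positivity), abs_of_nonneg (by positivity), hu]
    linarith
  have growth : sinh (k * u) ^ 2 - sinh u ^ 2 ≤ sinh (k * t) ^ 2 - sinh t ^ 2 :=
    monotoneOn_sinh_mul_sq_sub_sinh_sq hk hu₀ (hu₀.trans hut) hut
  have key : sinh (dist z' w' / 2) ^ 2 ≤ sinh (k * t) ^ 2 := by
    linarith [sinh_sq_half_dist_eq_add z' w', sinh_sq_half_dist_eq_add z w]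
  rw [sinh_sq_le_sinh_sq_iff, abs_of_nonneg (by positivity), abs_of_nonneg (by positivity), ht]
    at key
  linarith

theorem mem_range_vertical_line {a : ℝ} {z : ℍ} (hz : z.re = a) :
    z ∈ range fun y => mk ⟨a, exp y⟩ (exp_pos y) :=
  ⟨log z.im, by ext1; exact Complex.ext hz.symm (exp_log z.im_pos)⟩

end UpperHalfPlane

theorem neginv_eq_smul (z : ℍ) : neginv z = ModularGroup.S • z := by
  ext1
  rw [modular_S_smul]
  simp [neginv, inv_neg]

theorem isometry_neginv : Isometry neginv := by
  rw [show neginv = fun z => (ModularGroup.S : Matrix.SpecialLinearGroup (Fin 2) ℝ) • z from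
    funext neginv_eq_smul]
  exact isometry_smul ℍ _

theorem neginv_neginv (z : ℍ) : neginv (neginv z) = z := by
  ext1
  simp [neginv]

theorem neginv_re (z : ℍ) : (neginv z).re = -z.re / Complex.normSq z := by
  simp [neginv, ← coe_re, neg_div]

theorem neginv_im (z : ℍ) : (neginv z).im = z.im / Complex.normSq z := by
  simp [neginv, ← coe_im, neg_div]

theorem neginv_re_of_normSq_eq {z : ℍ} {r : ℝ} (h : Complex.normSq z = 2 * r * z.re) :
    (neginv z).re = -1 / (2 * r) := by
  have hpos : 0 < Complex.normSq z := Complex.normSq_pos.2 z.ne_zero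
  have hre : z.re ≠ 0 := fun h0 => by rw [h0, mul_zero] at h; exact hpos.ne' h
  have hr : r ≠ 0 := by rintro rfl; rw [h] at hpos; simp at hpos
  rw [neginv_re, h]
  field_simp

/-- The geodesic through `z` and `w` is the semicircle centred at `m` of radius `r`; after the
translation by `r - m` it ends at `0`, so `neginv` sends it to the vertical line `re = -1/(2r)`. -/
theorem exists_re_neginv_vadd_eq {z w : ℍ} (h : z.re ≠ w.re) :
    ∃ x : ℝ, (neginv (x +ᵥ z)).re = (neginv (x +ᵥ w)).re := by
  set m := (Complex.normSq z - Complex.normSq w) / (2 * (z.re - w.re)) with hm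
  set r := √((z.re - m) ^ 2 + z.im ^ 2)
  have on_circle : ∀ u : ℍ, (u.re - m) ^ 2 + u.im ^ 2 = r ^ 2 →
      (neginv ((r - m) +ᵥ u)).re = -1 / (2 * r) := by
    intro u hu
    apply neginv_re_of_normSq_eq
    rw [coe_vadd, vadd_re, Complex.normSq_apply]
    simp only [Complex.add_re, Complex.add_im, Complex.ofReal_re, Complex.ofReal_im, coe_re,
      coe_im]
    linear_combination hu
  have hr : r ^ 2 = (z.re - m) ^ 2 + z.im ^ 2 := sq_sqrt (by positivity)
  clear_value r m
  have hmw : (w.re - m) ^ 2 + w.im ^ 2 = r ^ 2 := by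
    have hsub : z.re - w.re ≠ 0 := sub_ne_zero.2 h
    have : m * (2 * (z.re - w.re)) = Complex.normSq z - Complex.normSq w := by
      rw [hm, div_mul_cancel₀ _ (mul_ne_zero two_ne_zero hsub)]
    simp only [Complex.normSq_apply, coe_re, coe_im] at this
    linear_combination this - hr
  exact ⟨r - m, by rw [on_circle z hr.symm, on_circle w hmw]⟩

theorem exists_isometry_mem_range (z w : ℍ) :
    ∃ γ : ℝ → ℍ, Isometry γ ∧ z ∈ range γ ∧ w ∈ range γ := by
  by_cases h : z.re = w.re
  · exact ⟨_, isometry_vertical_line z.re, mem_range_vertical_line rfl,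
      mem_range_vertical_line h.symm⟩
  obtain ⟨x, hx⟩ := exists_re_neginv_vadd_eq h
  refine ⟨(-x +ᵥ ·) ∘ neginv ∘ fun y => mk ⟨(neginv (x +ᵥ w)).re, exp y⟩ (exp_pos y),
    (isometry_real_vadd _).comp (isometry_neginv.comp (isometry_vertical_line _)), ?_, ?_⟩
  · obtain ⟨y, hy⟩ := mem_range_vertical_line hx
    exact ⟨y, by simp [hy, neginv_neginv]⟩
  · obtain ⟨y, hy⟩ := mem_range_vertical_line (rfl : (neginv (x +ᵥ w)).re = _)
    exact ⟨y, by simp [hy, neginv_neginv]⟩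

theorem exists_im_eq_dist_add_dist_eq {z w : ℍ} {c : ℝ} (hc : c ∈ uIcc z.im w.im) :
    ∃ p : ℍ, p.im = c ∧ dist z p + dist p w = dist z w := by
  obtain ⟨γ, hγ, ⟨s, rfl⟩, ⟨t, rfl⟩⟩ := exists_isometry_mem_range z w
  obtain ⟨r, hr, hrc⟩ :=
    intermediate_value_uIcc (continuous_im.comp hγ.continuous).continuousOn hc
  refine ⟨γ r, hrc, ?_⟩
  rw [hγ.dist_eq, hγ.dist_eq, hγ.dist_eq]
  exact dist_add_dist_of_mem_segment (by rwa [segment_eq_uIcc])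

open NNReal in
theorem lipschitzWith_of_lipschitzOnWith_le_im_of_im_le {f : ℍ → ℍ} {K : ℝ≥0} {c : ℝ}
    (hup : LipschitzOnWith K f {z | c ≤ z.im}) (hdown : LipschitzOnWith K f {z | z.im ≤ c}) :
    LipschitzWith K f := by
  have across : ∀ z w : ℍ, c ≤ z.im → w.im ≤ c → dist (f z) (f w) ≤ K * dist z w := by
    intro z w hz hw
    obtain ⟨p, hp, hzpw⟩ := exists_im_eq_dist_add_dist_eq (mem_uIcc.2 (Or.inr ⟨hw, hz⟩))
    calc dist (f z) (f w) ≤ dist (f z) (f p) + dist (f p) (f w) := dist_triangle _ _ _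
      _ ≤ K * dist z p + K * dist p w :=
        add_le_add (hup.dist_le_mul z hz p hp.ge) (hdown.dist_le_mul p hp.le w hw)
      _ = K * dist z w := by rw [← mul_add, hzpw]
  refine LipschitzWith.of_dist_le_mul fun z w => ?_
  rcases le_total c z.im with hz | hz <;> rcases le_total c w.im with hw | hw
  · exact hup.dist_le_mul z hz w hw
  · exact across z w hz hw
  · rw [dist_comm, dist_comm z]
    exact across w z hw hz
  · exact hdown.dist_le_mul z hz w hw

theorem lipschitzOnWith_vexp {k : ℝ} (hk : 1 ≤ k) :
    LipschitzOnWith k.toNNReal (vexp k) {z | 1 ≤ z.im} := by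
  refine LipschitzOnWith.of_dist_le_mul fun z hz w hw => ?_
  rw [Real.coe_toNNReal k (by linarith)]
  refine dist_le_mul_dist_of_re_eq_of_im_le hk rfl rfl (self_le_rpow_of_one_le hz hk)
    (self_le_rpow_of_one_le hw hk) (le_of_eq ?_)
  change dist (log (z.im ^ k)) (log (w.im ^ k)) = _
  rw [log_rpow z.im_pos, log_rpow w.im_pos, Real.dist_eq, Real.dist_eq, ← mul_sub, abs_mul,
    abs_of_nonneg (by linarith)]

theorem vexp_of_im_eq_one {k : ℝ} {z : ℍ} (hz : z.im = 1) : vexp k z = z := by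
  ext1
  exact Complex.ext rfl (by change z.im ^ k = z.im; rw [hz, one_rpow])

noncomputable def horoballExpand (k : ℝ) (z : ℍ) : ℍ :=
  if 1 ≤ z.im then vexp k z else z

theorem horoballExpand_of_im_le_one {k : ℝ} {z : ℍ} (hz : z.im ≤ 1) : horoballExpand k z = z := by
  unfold horoballExpand
  split_ifs with h
  · exact vexp_of_im_eq_one (le_antisymm hz h)
  · rfl

theorem lipschitzWith_horoballExpand {k : ℝ} (hk : 1 ≤ k) :
    LipschitzWith k.toNNReal (horoballExpand k) := by
  refine lipschitzWith_of_lipschitzOnWith_le_im_of_im_le (c := 1) ?_ ?_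
  · intro z (hz : 1 ≤ z.im) w (hw : 1 ≤ w.im)
    simp only [horoballExpand, if_pos hz, if_pos hw]
    exact lipschitzOnWith_vexp hk hz hw
  · intro z hz w hw
    rw [horoballExpand_of_im_le_one hz, horoballExpand_of_im_le_one hw]
    exact (LipschitzWith.id.weaken (Real.one_le_toNNReal.2 hk)) z w

theorem one_le_im_neginv_iff (z : ℍ) :
    1 ≤ (neginv z).im ↔ ‖(z : ℂ) - Complex.I / 2‖ ≤ 1 / 2 := by
  have hpos : 0 < Complex.normSq z := Complex.normSq_pos.2 z.ne_zero
  rw [neginv_im, one_le_div hpos, ← sq_le_sq₀ (norm_nonneg _) (by norm_num), Complex.sq_norm]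
  simp only [Complex.normSq_apply, Complex.sub_re, Complex.sub_im, Complex.div_re,
    Complex.div_im, Complex.I_re, Complex.I_im, coe_re, coe_im]
  constructor <;> intro h <;> norm_num at h ⊢ <;> linarith

theorem twoSector_of_im_le_one {k : ℝ} {z : ℍ} (hz : z.im ≤ 1) :
    twoSector k z = neginv (horoballExpand k (neginv z)) := by
  rcases hz.lt_or_eq with hz | hz
  · rw [twoSector, horoballExpand, if_neg (not_le.2 hz)]
    by_cases hB : 1 ≤ (neginv z).im
    · rw [if_pos ((one_le_im_neginv_iff z).1 hB), if_pos hB]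
    · rw [if_neg (mt (one_le_im_neginv_iff z).2 hB), if_neg hB, neginv_neginv]
  · have hN : (neginv z).im ≤ 1 := by
      rw [neginv_im, div_le_one (Complex.normSq_pos.2 z.ne_zero), Complex.normSq_apply]
      simp only [coe_re, coe_im, hz]
      nlinarith
    rw [twoSector, if_pos hz.ge, vexp_of_im_eq_one hz, horoballExpand_of_im_le_one hN,
      neginv_neginv]

theorem lipschitzWith_twoSector {k : ℝ} (hk : 1 ≤ k) :
    LipschitzWith k.toNNReal (twoSector k) := by
  refine lipschitzWith_of_lipschitzOnWith_le_im_of_im_le (c := 1) ?_ ?_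
  · intro z (hz : 1 ≤ z.im) w (hw : 1 ≤ w.im)
    simp only [twoSector, if_pos hz, if_pos hw]
    exact lipschitzOnWith_vexp hk hz hw
  · intro z (hz : z.im ≤ 1) w (hw : w.im ≤ 1)
    rw [twoSector_of_im_le_one hz, twoSector_of_im_le_one hw]
    have := isometry_neginv.lipschitz.comp
      ((lipschitzWith_horoballExpand hk).comp isometry_neginv.lipschitz)
    rw [mul_one, one_mul] at this
    exact this z w

/-- For every `k ≥ 1`, the two-sector expansion map `F_k` is `k`-Lipschitz on the whole
hyperbolic plane. -/
theorem twoSector_lipschitz (k : ℝ) (hk : 1 ≤ k) :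
    ∀ z w : UpperHalfPlane,
      dist (twoSector k z) (twoSector k w) ≤ k * dist z w := by
  intro z w
  simpa [Real.coe_toNNReal k (by linarith)] using (lipschitzWith_twoSector hk).dist_le_mul z w
end

section
/- For every real k ≥ 1, the two-sector expansion map F_k expands the geodesic from 0 to ∞ (the positive imaginary axis) by the factor exactly k: F_k(i·y) = i·y^k for every real y > 0, and dist(F_k(i·y₁), F_k(i·y₂)) = k · dist(i·y₁, i·y₂) for all y₁, y₂ > 0. Consequently, for every real k' with 0 ≤ k' < k, F_k is not k'-Lipschitz, so (combined with its k-Lipschitzness) the optimal Lipschitz constant of F_k equals k. -/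
open UpperHalfPlane Real

/-
On the imaginary axis, points with `Im z ≥ 1` are moved by the vertical expansion and all others
lie in the horoball at `0`, where `z ↦ -1/z` keeps the axis and inverts `Im z`; either way
`F_k(iy) = iy^k`. The axis is a geodesic on which `dist(iy₁, iy₂) = |log y₁ - log y₂|`, so `F_k`
multiplies these distances by `k`, and any smaller Lipschitz constant fails on a pair of axis
points.
-/

namespace UpperHalfPlane

lemma normSq_coe_of_re_eq_zero {z : ℍ} (hz : z.re = 0) : Complex.normSq (z : ℂ) = z.im ^ 2 := by
  rw [Complex.normSq_apply, coe_re, coe_im, hz]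
  ring

lemma norm_coe_sub_I_div_two_le {z : ℍ} (hz : z.re = 0) (him : z.im ≤ 1) :
    ‖(z : ℂ) - Complex.I / 2‖ ≤ 1 / 2 := by
  have hcoe : (z : ℂ) - Complex.I / 2 = ((z.im - 1 / 2 : ℝ) : ℂ) * Complex.I := by
    apply Complex.ext <;> simp [hz]
  rw [hcoe, norm_mul, Complex.norm_I, mul_one, Complex.norm_real, Real.norm_eq_abs, abs_le]
  constructor <;> linarith [z.im_pos]

end UpperHalfPlane

lemma neginv_re_of_re_eq_zero {z : ℍ} (hz : z.re = 0) : (neginv z).re = 0 := by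
  change (-((z : ℂ)⁻¹)).re = 0
  rw [Complex.neg_re, Complex.inv_re, coe_re, hz, zero_div, neg_zero]

lemma neginv_im_of_re_eq_zero {z : ℍ} (hz : z.re = 0) : (neginv z).im = z.im⁻¹ := by
  change (-((z : ℂ)⁻¹)).im = z.im⁻¹
  rw [Complex.neg_im, Complex.inv_im, normSq_coe_of_re_eq_zero hz, coe_im, neg_div, neg_neg,
    sq, div_mul_cancel_left₀ z.im_ne_zero]

lemma twoSector_of_re_eq_zero (k : ℝ) {z : ℍ} (hz : z.re = 0) :
    (twoSector k z).re = 0 ∧ (twoSector k z).im = z.im ^ k := by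
  unfold twoSector
  by_cases hz₁ : 1 ≤ z.im
  · rw [if_pos hz₁]
    exact ⟨hz, rfl⟩
  · rw [if_neg hz₁, if_pos (norm_coe_sub_I_div_two_le hz (le_of_not_ge hz₁))]
    have hexp : (vexp k (neginv z)).re = 0 := neginv_re_of_re_eq_zero hz
    refine ⟨neginv_re_of_re_eq_zero hexp, ?_⟩
    rw [neginv_im_of_re_eq_zero hexp, show (vexp k (neginv z)).im = (neginv z).im ^ k from rfl,
      neginv_im_of_re_eq_zero hz, Real.inv_rpow z.im_pos.le, inv_inv]

lemma dist_twoSector_of_re_eq_zero {k : ℝ} (hk : 0 ≤ k) {z w : ℍ} (hz : z.re = 0)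
    (hw : w.re = 0) : dist (twoSector k z) (twoSector k w) = k * dist z w := by
  obtain ⟨hFz_re, hFz_im⟩ := twoSector_of_re_eq_zero k hz
  obtain ⟨hFw_re, hFw_im⟩ := twoSector_of_re_eq_zero k hw
  rw [dist_of_re_eq (hFz_re.trans hFw_re.symm), dist_of_re_eq (hz.trans hw.symm), hFz_im, hFw_im,
    Real.log_rpow z.im_pos, Real.log_rpow w.im_pos, Real.dist_eq, Real.dist_eq, ← mul_sub,
    abs_mul, abs_of_nonneg hk]

lemma not_forall_dist_le_mul_of_dist_eq_mul {X Y : Type*} [MetricSpace X] [PseudoMetricSpace Y]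
    {f : X → Y} {k k' : ℝ} {x y : X} (hxy : x ≠ y) (hf : dist (f x) (f y) = k * dist x y)
    (hk' : k' < k) : ¬ ∀ z w, dist (f z) (f w) ≤ k' * dist z w := by
  intro hlip
  exact hk'.not_ge (le_of_mul_le_mul_right (hf ▸ hlip x y) (dist_pos.mpr hxy))

/-- For `k ≥ 1`, the two-sector expansion map `F_k` expands the geodesic from `0` to `∞`
(the positive imaginary axis, i.e. the points of `ℍ` with real part `0`) by exactly the
factor `k`: `F_k(i·y) = i·y^k`, distances along this axis are multiplied by exactly `k`,
and consequently `F_k` is not `k'`-Lipschitz for any `0 ≤ k' < k` (so its optimal Lipschitz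
constant is exactly `k`). -/
theorem twoSector_expands_imaginary_axis (k : ℝ) (hk : 1 ≤ k) :
    (∀ z : UpperHalfPlane, z.re = 0 →
      (twoSector k z).re = 0 ∧ (twoSector k z).im = z.im ^ k) ∧
    (∀ z w : UpperHalfPlane, z.re = 0 → w.re = 0 →
      dist (twoSector k z) (twoSector k w) = k * dist z w) ∧
    (∀ k' : ℝ, 0 ≤ k' → k' < k →
      ¬ (∀ z w : UpperHalfPlane,
          dist (twoSector k z) (twoSector k w) ≤ k' * dist z w)) := by
  have hk₀ : 0 ≤ k := zero_le_one.trans hk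
  refine ⟨fun z hz => twoSector_of_re_eq_zero k hz,
    fun z w hz hw => dist_twoSector_of_re_eq_zero hk₀ hz hw, fun k' _ hk' => ?_⟩
  let I₂ : ℍ := mk (2 * Complex.I) (by simp)
  have hI₂ : I₂.re = 0 := by simp [I₂]
  have hne : I ≠ I₂ := fun h => by simpa [I₂] using congrArg im h
  exact not_forall_dist_le_mul_of_dist_eq_mul hne (dist_twoSector_of_re_eq_zero hk₀ I_re hI₂) hk'
end

section
/- There exists x₀ > 1 such that for all real x ≥ x₀, arsinh(x³)/arsinh(x²) < arsinh(√(x⁶ + 1)/√(x⁸ − 1)) / arsinh(1/√(x⁴ − 1)). (The left side tends to 3/2 while the right side grows like x, so the arc-length ratio eventually strictly exceeds the maximal curve-length ratio.) -/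
/-! The curve ratio is at most `2` for every `x`, while the arc ratio exceeds `2` once `x ≥ 3`.
Both comparisons reduce, via `sinh (2 * arsinh t) = 2 t √(1 + t²)`, to algebra: for
`t = 1 / √(x⁴ - 1)` this is `2x² / (x⁴ - 1) ~ 2 / x²`, whereas the arc argument
`√(x⁶ + 1) / √(x⁸ - 1)` exceeds `1 / x`. -/

open Real

lemma Real.lt_arsinh_iff {a s : ℝ} : a < arsinh s ↔ sinh a < s := by
  rw [← sinh_lt_sinh, sinh_arsinh]

lemma Real.arsinh_le_iff {a s : ℝ} : arsinh s ≤ a ↔ s ≤ sinh a := by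
  simpa only [not_lt] using Real.lt_arsinh_iff.not

lemma Real.sinh_two_mul_arsinh (t : ℝ) : sinh (2 * arsinh t) = 2 * t * √(1 + t ^ 2) := by
  rw [sinh_two_mul, sinh_arsinh, cosh_arsinh]

lemma Real.sinh_two_mul_arsinh_one_div_sqrt_sq_sub_one {c : ℝ} (hc : 1 < c) :
    sinh (2 * arsinh (1 / √(c ^ 2 - 1))) = 2 * c / (c ^ 2 - 1) := by
  have hc2 : 0 < c ^ 2 - 1 := by nlinarith
  have hsq : √(c ^ 2 - 1) ^ 2 = c ^ 2 - 1 := sq_sqrt hc2.le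
  have hcosh : √(1 + (1 / √(c ^ 2 - 1)) ^ 2) = c / √(c ^ 2 - 1) := by
    rw [sqrt_eq_iff_mul_self_eq_of_pos (by positivity)]
    field_simp
    rw [hsq]
    ring
  rw [sinh_two_mul_arsinh, hcosh]
  field_simp
  rw [hsq]

lemma arsinh_pow_three_le_two_mul_arsinh_sq (x : ℝ) : arsinh (x ^ 3) ≤ 2 * arsinh (x ^ 2) := by
  rw [arsinh_le_iff, sinh_two_mul_arsinh]
  have hx : x ≤ √(1 + (x ^ 2) ^ 2) :=
    (le_abs_self x).trans (abs_le_sqrt (by nlinarith [sq_nonneg (x ^ 2 - 1)]))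
  have hsqrt : 0 ≤ √(1 + (x ^ 2) ^ 2) := sqrt_nonneg _
  calc x ^ 3 = x ^ 2 * x := by ring
    _ ≤ x ^ 2 * √(1 + (x ^ 2) ^ 2) := by gcongr
    _ ≤ 2 * x ^ 2 * √(1 + (x ^ 2) ^ 2) := by nlinarith [sq_nonneg x]

lemma one_div_lt_sqrt_div_sqrt {x : ℝ} (hx : 1 < x) :
    1 / x < √(x ^ 6 + 1) / √(x ^ 8 - 1) := by
  have hx8 : 0 < x ^ 8 - 1 := by nlinarith [one_lt_pow₀ hx (n := 8) (by norm_num)]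
  rw [div_lt_div_iff₀ (by positivity) (sqrt_pos.2 hx8), one_mul,
    sqrt_lt' (by positivity), mul_pow, sq_sqrt (by positivity)]
  nlinarith [sq_nonneg x]

lemma two_mul_arsinh_one_div_sqrt_lt_arsinh {x : ℝ} (hx : 3 ≤ x) :
    2 * arsinh (1 / √(x ^ 4 - 1)) < arsinh (√(x ^ 6 + 1) / √(x ^ 8 - 1)) := by
  have hx2 : 1 < x ^ 2 := by nlinarith
  rw [lt_arsinh_iff, show x ^ 4 = (x ^ 2) ^ 2 by ring,
    sinh_two_mul_arsinh_one_div_sqrt_sq_sub_one hx2]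
  refine lt_trans ?_ (one_div_lt_sqrt_div_sqrt (by linarith))
  rw [div_lt_div_iff₀ (by nlinarith) (by linarith)]
  nlinarith [mul_le_mul hx hx (by norm_num) (by linarith)]

/-- There is an `x₀ > 1` such that for all `x ≥ x₀`, the maximal curve-length ratio
`arsinh (x³) / arsinh (x²)` is strictly smaller than the orthogeodesic arc-length ratio
`arsinh (√(x⁶ + 1)/√(x⁸ − 1)) / arsinh (1/√(x⁴ − 1))`. -/
theorem arc_ratio_eventually_exceeds_curve_ratio :
    ∃ x₀ : ℝ, 1 < x₀ ∧ ∀ x : ℝ, x₀ ≤ x →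
      arsinh (x ^ 3) / arsinh (x ^ 2) <
        arsinh (Real.sqrt (x ^ 6 + 1) / Real.sqrt (x ^ 8 - 1)) /
          arsinh (1 / Real.sqrt (x ^ 4 - 1)) := by
  refine ⟨3, by norm_num, fun x hx => ?_⟩
  have hcurve_pos : 0 < arsinh (x ^ 2) := arsinh_pos_iff.2 (by positivity)
  have hx4 : 0 < x ^ 4 - 1 := by nlinarith [pow_le_pow_left₀ (by norm_num) hx 4]
  have harc_pos : 0 < arsinh (1 / √(x ^ 4 - 1)) := arsinh_pos_iff.2 (by positivity)
  calc arsinh (x ^ 3) / arsinh (x ^ 2) ≤ 2 :=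
        div_le_of_le_mul₀ hcurve_pos.le (by norm_num) (arsinh_pow_three_le_two_mul_arsinh_sq x)
    _ < _ := (lt_div_iff₀ harc_pos).2 (two_mul_arsinh_one_div_sqrt_lt_arsinh hx)
end
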